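/- arXiv:2108.00381 — 11 statements merged into one kernel-verified Lean document; each statement's English description precedes it below -/
import Mathlib

section
/- In a single-parameter auction environment, if an allocation rule π is monotone non-decreasing in each bidder's bid, then the payment rule defined by x_i(b) = π_i(b)·b_i − ∫₀^{b_i} π_i(z, b_{−i}) dz makes truthful bidding a dominant strategy (the mechanism is incentive compatible). -/
/-!
Fix the other bids and write `f z = π_i(z, b_{-i})`. Truthful bidding beats bidding `t` by
`∫_t^v f - f(t)(v - t)`, which is nonnegative because `f` is monotone: on the interval between
`t` and `v`, `f` lies above `f(t)` when `t ≤ v` and below it when `v ≤ t`.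
-/

open intervalIntegral

theorem Monotone.mul_sub_le_intervalIntegral {f : ℝ → ℝ} (hf : Monotone f) (a b : ℝ) :
    f a * (b - a) ≤ ∫ z in a..b, f z := by
  rcases le_total a b with hab | hba
  · simpa [mul_comm] using
      integral_mono_on hab (intervalIntegrable_const (μ := MeasureTheory.volume))
        hf.intervalIntegrable fun z hz => hf hz.1
  · have h : ∫ z in b..a, f z ≤ ∫ _ in b..a, f a :=
      integral_mono_on hba hf.intervalIntegrable intervalIntegrable_const fun z hz => hf hz.2
    rw [intervalIntegral.integral_const, smul_eq_mul] at h
    rw [integral_symm]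
    linarith

theorem Monotone.myerson_utility_le {f : ℝ → ℝ} (hf : Monotone f) (t v : ℝ) :
    f t * v - (f t * t - ∫ z in 0..t, f z) ≤ f v * v - (f v * v - ∫ z in 0..v, f z) := by
  have hsplit : (∫ z in 0..v, f z) - ∫ z in 0..t, f z = ∫ z in t..v, f z :=
    integral_interval_sub_left hf.intervalIntegrable hf.intervalIntegrable
  linarith [hf.mul_sub_le_intervalIntegral t v]

theorem myerson_payment_ic_general (n : ℕ) (π : (Fin n → ℝ) → Fin n → ℝ)
    (hmono : ∀ (i : Fin n) (b : Fin n → ℝ),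
      Monotone fun z : ℝ => π (Function.update b i z) i)
    (x : (Fin n → ℝ) → Fin n → ℝ)
    (hx : ∀ (b : Fin n → ℝ) (i : Fin n),
      x b i = π b i * b i - ∫ z in (0 : ℝ)..(b i), π (Function.update b i z) i) :
    ∀ (i : Fin n) (b : Fin n → ℝ) (v bi : ℝ), 0 ≤ v → 0 ≤ bi →
      π (Function.update b i bi) i * v - x (Function.update b i bi) i ≤
        π (Function.update b i v) i * v - x (Function.update b i v) i := by
  intro i b v bi _ _
  simpa only [hx, Function.update_self, Function.update_idem] using
    (hmono i b).myerson_utility_le bi v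

/-- Myerson's lemma (payment direction): in a single-parameter environment,
if the allocation rule `π` is monotone in each bidder's own bid, then the
payment rule `x_i(b) = π_i(b)·b_i − ∫₀^{b_i} π_i(z, b_{−i}) dz` makes truthful
bidding a dominant strategy. -/
theorem myerson_payment_ic (n : ℕ) (π : (Fin n → ℝ) → Fin n → ℝ)
    (hrange : ∀ (b : Fin n → ℝ) (i : Fin n), π b i ∈ Set.Icc (0 : ℝ) 1)
    (hmono : ∀ (i : Fin n) (b : Fin n → ℝ),
      Monotone fun z : ℝ => π (Function.update b i z) i)
    (x : (Fin n → ℝ) → Fin n → ℝ)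
    (hx : ∀ (b : Fin n → ℝ) (i : Fin n),
      x b i = π b i * b i - ∫ z in (0 : ℝ)..(b i), π (Function.update b i z) i) :
    ∀ (i : Fin n) (b : Fin n → ℝ) (v bi : ℝ), 0 ≤ v → 0 ≤ bi →
      π (Function.update b i bi) i * v - x (Function.update b i bi) i ≤
        π (Function.update b i v) i * v - x (Function.update b i v) i :=
  myerson_payment_ic_general n π hmono x hx
end

section
/- In a single-parameter auction environment, if an allocation rule π is implementable (i.e., there exists a payment rule making truthful bidding a dominant strategy), then π is monotone: for each bidder i and each fixed profile b_{−i} of other bids, π_i(b_i, b_{−i}) is non-decreasing in b_i. -/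
/-- Myerson's lemma (monotonicity direction): in a single-parameter environment,
if an allocation rule `π` is implementable (some payment rule makes truthful
bidding a dominant strategy), then `π_i(b_i, b_{−i})` is non-decreasing in the
own bid `b_i` for every bidder `i` and every fixed profile of other bids. -/
theorem implementable_implies_monotone (n : ℕ) (π : (Fin n → ℝ) → Fin n → ℝ)
    (hrange : ∀ (b : Fin n → ℝ) (i : Fin n), π b i ∈ Set.Icc (0 : ℝ) 1)
    (himpl : ∃ x : (Fin n → ℝ) → Fin n → ℝ,
      ∀ (i : Fin n) (b : Fin n → ℝ) (v bi : ℝ), 0 ≤ v → 0 ≤ bi →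
        π (Function.update b i bi) i * v - x (Function.update b i bi) i ≤
          π (Function.update b i v) i * v - x (Function.update b i v) i) :
    ∀ (i : Fin n) (b : Fin n → ℝ) (z z' : ℝ), 0 ≤ z → z ≤ z' →
      π (Function.update b i z) i ≤ π (Function.update b i z') i := by
  obtain ⟨x, hx⟩ := himpl
  intro i b z z' hz hzz'
  have hz' : (0:ℝ) ≤ z' := le_trans hz hzz'
  have h1 := hx i b z' z hz' hz
  have h2 := hx i b z z' hz hz'
  rcases eq_or_lt_of_le hzz' with h | h
  · subst h; exact le_refl _
  · nlinarith [sub_pos.mpr h]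
end

section
/- In a single-item diffusion auction with payment decomposed as x_i = π_i·x̃_i + (1−π_i)·x̄_i where x̃_i, x̄_i depend only on i's reported neighbor set r_i (not on i's bid), if (a) the allocation is value-monotone with critical bid v*_i(r_i), (b) x̃_i(r_i) − x̄_i(r_i) = v*_i(r_i) for all r_i, and (c) for all r ⊆ r', x̄_i(r') ≤ x̄_i(r) and v*_i(r') ≤ v*_i(r) (so diffusing more weakly lowers both the losing payment and the critical bid), then reporting the true value and the full neighbor set is a dominant strategy for bidder i. -/
/-- Truthfulness of a single-item diffusion auction: with payments decomposed
into a bid-independent winning payment `xt` and losing payment `xb`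
(functions of the reported neighbour set only), if the allocation is
value-monotone with critical bid `vstar`, `xt r − xb r = vstar r`, and both
the losing payment and the critical bid are antitone in the diffusion effort
(`r ⊆ r' → xb r' ≤ xb r` and `vstar r' ≤ vstar r`), then reporting the true
value and the full neighbour set is a dominant strategy for bidder `i`. -/
theorem diffusion_auction_ic (vstar xt xb : Finset ℕ → ℝ)
    (hdec : ∀ r : Finset ℕ, xt r - xb r = vstar r)
    (hxb : ∀ ⦃r r' : Finset ℕ⦄, r ⊆ r' → xb r' ≤ xb r)
    (hvstar : ∀ ⦃r r' : Finset ℕ⦄, r ⊆ r' → vstar r' ≤ vstar r)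
    (v : ℝ) (hv : 0 ≤ v) (r : Finset ℕ) :
    ∀ (v' : ℝ) (r' : Finset ℕ), r' ⊆ r →
      (if vstar r' ≤ v' then v - xt r' else -xb r') ≤
        (if vstar r ≤ v then v - xt r else -xb r) := by
  intro v' r' hsub
  have h1 := hxb hsub
  have h2 := hvstar hsub
  have d1 := hdec r
  have d2 := hdec r'
  split_ifs with ha hb hb <;> linarith
end

section
/- In a single-item diffusion auction satisfying the conditions of the IC characterization (value-monotone allocation with critical bids, bid-independent winning/losing payments with x̃_i(r) − x̄_i(r) = v*_i(r), diffusion monotonicity, and x̄_i(∅) ≤ 0), truthful reporting guarantees every bidder non-negative utility (individual rationality). -/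
/-- Individual rationality of truthful single-item diffusion auctions: under
the IC characterization conditions (value-monotone allocation with critical
bids `vstar`, bid-independent winning/losing payments with
`xt r − xb r = vstar r`, diffusion monotonicity of `xt`, `xb` and `vstar`,
and `xb ∅ ≤ 0`), truthful reporting yields non-negative utility. -/
theorem diffusion_auction_ir (vstar xt xb : Finset ℕ → ℝ)
    (hdec : ∀ r : Finset ℕ, xt r - xb r = vstar r)
    (hxb : ∀ ⦃r r' : Finset ℕ⦄, r ⊆ r' → xb r' ≤ xb r)
    (hxt : ∀ ⦃r r' : Finset ℕ⦄, r ⊆ r' → xt r' ≤ xt r)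
    (hvstar : ∀ ⦃r r' : Finset ℕ⦄, r ⊆ r' → vstar r' ≤ vstar r)
    (hempty : xb ∅ ≤ 0)
    (v : ℝ) (hv : 0 ≤ v) (r : Finset ℕ) :
    0 ≤ (if vstar r ≤ v then v - xt r else -xb r) := by
  have hxbr : xb r ≤ 0 := le_trans (hxb (Finset.empty_subset r)) hempty
  split
  · next h =>
    have := hdec r
    nlinarith
  · linarith
end

section
/- In a truthful single-item diffusion auction where winning payments equal x̃_i(r) = v*_i(∅) and losing payments equal x̄_i(r) = v*_i(∅) − v*_i(r), the seller's revenue equals ∑_i [ v*_i(∅) − v*_i(r_i)·(1 − π_i) ], and among all payment rules satisfying the IC characterization conditions this choice pointwise maximizes the seller's revenue. -/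
/-- Optimal revenue of truthful single-item diffusion auctions: with winning
payments `xt* i r = vstar i ∅` and losing payments
`xb* i r = vstar i ∅ − vstar i r`, the seller's revenue equals
`∑ i, (vstar i ∅ − vstar i (r i)·(1 − π i))`, and any payment rule satisfying
the IC-characterization conditions yields pointwise no larger revenue. -/
theorem diffusion_auction_optimal_revenue (n : ℕ) (vstar : Fin n → Finset ℕ → ℝ)
    (hvnonneg : ∀ (i : Fin n) (r : Finset ℕ), 0 ≤ vstar i r)
    (hvstar : ∀ (i : Fin n) ⦃r r' : Finset ℕ⦄, r ⊆ r' → vstar i r' ≤ vstar i r)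
    (π : Fin n → ℝ) (hπ : ∀ i, π i = 0 ∨ π i = 1) (hπsum : ∑ i, π i = 1)
    (r : Fin n → Finset ℕ) :
    (∑ i, (π i * vstar i ∅ + (1 - π i) * (vstar i ∅ - vstar i (r i))) =
        ∑ i, (vstar i ∅ - vstar i (r i) * (1 - π i))) ∧
      (∀ xt xb : Fin n → Finset ℕ → ℝ,
        (∀ (i : Fin n) (s : Finset ℕ), xt i s - xb i s = vstar i s) →
        (∀ (i : Fin n) ⦃s s' : Finset ℕ⦄, s ⊆ s' → xb i s' ≤ xb i s) →
        (∀ (i : Fin n) ⦃s s' : Finset ℕ⦄, s ⊆ s' → xt i s' ≤ xt i s) →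
        (∀ i : Fin n, xb i ∅ ≤ 0) →
        ∑ i, (π i * xt i (r i) + (1 - π i) * xb i (r i)) ≤
          ∑ i, (π i * vstar i ∅ + (1 - π i) * (vstar i ∅ - vstar i (r i)))) := by
  constructor
  · apply Finset.sum_congr rfl
    intro i _
    ring
  · intro xt xb hdiff hxb hxt hxb0
    apply Finset.sum_le_sum
    intro i _
    have h1 : xt i (r i) ≤ xt i ∅ := hxt i (Finset.empty_subset _)
    have h2 : xb i (r i) ≤ xb i ∅ + (vstar i ∅ - vstar i (r i)) := by
      have := hdiff i (r i)
      have := hdiff i ∅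
      nlinarith [hxt i (Finset.empty_subset (r i))]
    rcases hπ i with h | h <;> rw [h]
    · have := hxb0 i
      nlinarith
    · have : xt i ∅ ≤ vstar i ∅ := by
        have := hdiff i ∅
        have := hxb0 i
        linarith
      nlinarith
end

section
/- In a truthful single-item diffusion auction satisfying the IC characterization, the seller's revenue from any losing bidder i is at most v*_i(∅) − v*_i(r_i), and the revenue from the winning bidder is at most v*_i(∅); hence the optimal total revenue is ∑_i v*_i(∅) − ∑_{i loses} v*_i(r_i). -/
/-- Revenue bounds for truthful single-item diffusion auctions: under the IC
characterization, every losing bidder contributes at most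
`vstar i ∅ − vstar i (r i)`, the winner contributes at most `vstar i ∅`, and
hence the total revenue is at most `∑ i, vstar i ∅ − ∑_{i loses} vstar i (r i)`. -/
theorem diffusion_auction_revenue_bounds (n : ℕ) (vstar : Fin n → Finset ℕ → ℝ)
    (hvnonneg : ∀ (i : Fin n) (s : Finset ℕ), 0 ≤ vstar i s)
    (hvstar : ∀ (i : Fin n) ⦃s s' : Finset ℕ⦄, s ⊆ s' → vstar i s' ≤ vstar i s)
    (π : Fin n → ℝ) (hπ : ∀ i, π i = 0 ∨ π i = 1) (hπsum : ∑ i, π i = 1)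
    (r : Fin n → Finset ℕ) (xt xb : Fin n → Finset ℕ → ℝ)
    (hdec : ∀ (i : Fin n) (s : Finset ℕ), xt i s - xb i s = vstar i s)
    (hxb : ∀ (i : Fin n) ⦃s s' : Finset ℕ⦄, s ⊆ s' → xb i s' ≤ xb i s)
    (hxt : ∀ (i : Fin n) ⦃s s' : Finset ℕ⦄, s ⊆ s' → xt i s' ≤ xt i s)
    (hempty : ∀ i : Fin n, xb i ∅ ≤ 0) :
    (∀ i : Fin n, xb i (r i) ≤ vstar i ∅ - vstar i (r i)) ∧
      (∀ i : Fin n, xt i (r i) ≤ vstar i ∅) ∧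
      ∑ i, (π i * xt i (r i) + (1 - π i) * xb i (r i)) ≤
        (∑ i, vstar i ∅) - ∑ i ∈ Finset.univ.filter fun i => π i = 0, vstar i (r i) := by
  have hxb0 : ∀ i : Fin n, xb i (r i) ≤ 0 := fun i =>
    le_trans (hxb i (Finset.empty_subset (r i))) (hempty i)
  have h1 : ∀ i : Fin n, xb i (r i) ≤ vstar i ∅ - vstar i (r i) := fun i => by
    have := hvstar i (Finset.empty_subset (r i))
    have := hvnonneg i (r i)
    nlinarith [hxb0 i]
  have h2 : ∀ i : Fin n, xt i (r i) ≤ vstar i ∅ := fun i => by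
    have hd := hdec i (r i)
    have := hvstar i (Finset.empty_subset (r i))
    nlinarith [hxb0 i]
  refine ⟨h1, h2, ?_⟩
  have : ∀ i : Fin n, π i * xt i (r i) + (1 - π i) * xb i (r i) ≤
      vstar i ∅ - (if π i = 0 then vstar i (r i) else 0) := by
    intro i
    rcases hπ i with h | h <;> simp [h] <;> [exact h1 i; exact h2 i]
  calc ∑ i, (π i * xt i (r i) + (1 - π i) * xb i (r i))
      ≤ ∑ i, (vstar i ∅ - (if π i = 0 then vstar i (r i) else 0)) :=
        Finset.sum_le_sum fun i _ => this i
    _ = (∑ i, vstar i ∅) - ∑ i ∈ Finset.univ.filter fun i => π i = 0, vstar i (r i) := by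
        rw [Finset.sum_sub_distrib, Finset.sum_filter]
end

section
/- Consider a single-item auction on a tree rooted at the seller, where the VCG payment of each agent i is SW*(t_{−i}) − (SW*(t) − π_i v_i), with SW*(t_{−S}) the highest value among agents still connected to the root after removing S and all agents reachable only through S. Then there exist tree instances in which the seller's total VCG revenue is strictly negative. -/
/-- VCG on social networks can run a deficit: there exists a rooted-tree
instance (here encoded by, for each agent `i`, the set `D i` of agents
disconnected from the seller when `i` is removed, with `i ∈ D i` and nested
subtrees) and non-negative values, such that the total VCG revenue
`∑ i, (v*_{−i} − (v*_N − π_i v_i))` is strictly negative, where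
`v*_{−i}` is the highest value among agents still connected after removing
`D i` and the efficient allocation `π` gives the item to a highest-value agent. -/
theorem vcg_diffusion_negative_revenue :
    ∃ (n : ℕ) (v : Fin n → NNReal) (D : Fin n → Finset (Fin n)) (π : Fin n → ℝ),
      (∀ i, i ∈ D i) ∧
      (∀ i j, j ∈ D i → D j ⊆ D i) ∧
      (∀ i, π i = 0 ∨ π i = 1) ∧
      (∑ i, π i = 1) ∧
      (∀ i, π i = 1 → v i = Finset.univ.sup v) ∧
      (∑ i, (((Finset.univ \ D i).sup v).toReal - (Finset.univ.sup v).toReal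
          + π i * (v i : ℝ))) < 0 := by
  refine ⟨2, ![0, 10], ![{0, 1}, {1}], ![0, 1], ?_, ?_, ?_, ?_, ?_, ?_⟩
  · decide
  · decide
  · intro i
    fin_cases i <;> simp
  · simp [Fin.sum_univ_two]
  · intro i
    have h3 : (Finset.univ.sup ![(0 : NNReal), 10]) = 10 := by
      rw [show (Finset.univ : Finset (Fin 2)) = {0, 1} by decide]
      simp
    fin_cases i <;> simp [h3]
  · have h1 : (Finset.univ \ ({0, 1} : Finset (Fin 2))) = ∅ := by decide
    have h2 : (Finset.univ \ ({1} : Finset (Fin 2))) = {0} := by decide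
    have h3 : (Finset.univ.sup ![(0 : NNReal), 10]) = 10 := by
      rw [show (Finset.univ : Finset (Fin 2)) = {0, 1} by decide]
      simp
    simp [Fin.sum_univ_two, h1, h2, h3]
end

section
/- In the VCG diffusion auction on a rooted tree, every agent's payment is non-positive except possibly for agents on the path from the root to the highest-value agent, and the total revenue equals v*_{−1} + ∑_{i ∈ C_w \ {1}} (v*_{−i} − v*_N) ≤ v*_{−1}, where 1 denotes the winner's first critical node, v*_N is the overall highest value, v*_{−i} is the highest value after removing i's subtree, and v*_{−1} is the highest value after removing the first critical node's subtree; in particular VCG revenue never exceeds the IDM revenue v*_{−1}. -/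
/-- VCG diffusion revenue on a rooted tree: every agent off the critical
diffusion sequence `C_w` (the path to the highest-value agent `w`) pays a
non-positive amount, the total VCG revenue equals
`∑_{i ∈ C_w \ {1}} (v*_{−i} − v*_N) + v*_{−1}`, and since `v*_{−i} ≤ v*_N`,
VCG revenue never exceeds the IDM revenue `v*_{−1}`.  Here `T i` is the
subtree removed together with `i`, `v*_{−i}` is the highest remaining value,
and `node1` is the first critical node (largest subtree on the path). -/
theorem vcg_revenue_le_idm_revenue (n : ℕ) (v : Fin n → NNReal)
    (T : Fin n → Finset (Fin n))
    (hmem : ∀ i, i ∈ T i) (hnest : ∀ i j, j ∈ T i → T j ⊆ T i)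
    (w : Fin n) (hw : v w = Finset.univ.sup v)
    (node1 : Fin n) (hnode1 : w ∈ T node1)
    (hfirst : ∀ i, w ∈ T i → T i ⊆ T node1) :
    (∀ i, w ∉ T i →
      ((Finset.univ \ T i).sup v).toReal - (Finset.univ.sup v).toReal
        + (if i = w then (Finset.univ.sup v).toReal else 0) ≤ 0) ∧
    (∑ i, (((Finset.univ \ T i).sup v).toReal - (Finset.univ.sup v).toReal
        + (if i = w then (Finset.univ.sup v).toReal else 0)) =
      (∑ i ∈ (Finset.univ.filter fun i => w ∈ T i).erase node1,
        (((Finset.univ \ T i).sup v).toReal - (Finset.univ.sup v).toReal))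
        + ((Finset.univ \ T node1).sup v).toReal) ∧
    (∑ i, (((Finset.univ \ T i).sup v).toReal - (Finset.univ.sup v).toReal
        + (if i = w then (Finset.univ.sup v).toReal else 0)) ≤
      ((Finset.univ \ T node1).sup v).toReal) := by
  classical
  have hle : ∀ i : Fin n, ((Finset.univ \ T i).sup v) ≤ Finset.univ.sup v :=
    fun i => Finset.sup_mono Finset.sdiff_subset
  have heq : ∀ i : Fin n, w ∉ T i →
      ((Finset.univ \ T i).sup v) = Finset.univ.sup v := by
    intro i hi
    refine le_antisymm (hle i) ?_
    rw [← hw]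
    exact Finset.le_sup (Finset.mem_sdiff.mpr ⟨Finset.mem_univ _, hi⟩)
  have hzero : ∀ i : Fin n, w ∉ T i →
      ((Finset.univ \ T i).sup v).toReal - (Finset.univ.sup v).toReal
        + (if i = w then (Finset.univ.sup v).toReal else 0) = 0 := by
    intro i hi
    have hne : i ≠ w := by rintro rfl; exact hi (hmem i)
    rw [if_neg hne, heq i hi]; ring
  refine ⟨fun i hi => le_of_eq (hzero i hi), ?_, ?_⟩
  · -- revenue identity
    have hsub : (Finset.univ.filter fun i => w ∈ T i) ⊆ (Finset.univ : Finset (Fin n)) :=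
      Finset.filter_subset _ _
    rw [← Finset.sum_subset hsub (by
      intro i _ hi
      have : w ∉ T i := by
        intro hwi
        exact hi (Finset.mem_filter.mpr ⟨Finset.mem_univ _, hwi⟩)
      exact hzero i this)]
    rw [Finset.sum_add_distrib, Finset.sum_ite_eq' _ w
      (fun _ => (Finset.univ.sup v).toReal)]
    have hwmem : w ∈ Finset.univ.filter fun i => w ∈ T i :=
      Finset.mem_filter.mpr ⟨Finset.mem_univ _, hmem w⟩
    have hnmem : node1 ∈ Finset.univ.filter fun i => w ∈ T i :=
      Finset.mem_filter.mpr ⟨Finset.mem_univ _, hnode1⟩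
    rw [if_pos hwmem, ← Finset.sum_erase_add _ _ hnmem]
    ring
  · -- inequality
    have h2 : ∑ i, (((Finset.univ \ T i).sup v).toReal - (Finset.univ.sup v).toReal
        + (if i = w then (Finset.univ.sup v).toReal else 0)) =
      (∑ i ∈ (Finset.univ.filter fun i => w ∈ T i).erase node1,
        (((Finset.univ \ T i).sup v).toReal - (Finset.univ.sup v).toReal))
        + ((Finset.univ \ T node1).sup v).toReal := by
      have hsub : (Finset.univ.filter fun i => w ∈ T i) ⊆ (Finset.univ : Finset (Fin n)) :=
        Finset.filter_subset _ _
      rw [← Finset.sum_subset hsub (by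
        intro i _ hi
        have : w ∉ T i := by
          intro hwi
          exact hi (Finset.mem_filter.mpr ⟨Finset.mem_univ _, hwi⟩)
        exact hzero i this)]
      rw [Finset.sum_add_distrib, Finset.sum_ite_eq' _ w
        (fun _ => (Finset.univ.sup v).toReal)]
      have hwmem : w ∈ Finset.univ.filter fun i => w ∈ T i :=
        Finset.mem_filter.mpr ⟨Finset.mem_univ _, hmem w⟩
      have hnmem : node1 ∈ Finset.univ.filter fun i => w ∈ T i :=
        Finset.mem_filter.mpr ⟨Finset.mem_univ _, hnode1⟩
      rw [if_pos hwmem, ← Finset.sum_erase_add _ _ hnmem]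
      ring
    rw [h2]
    have : (∑ i ∈ (Finset.univ.filter fun i => w ∈ T i).erase node1,
        (((Finset.univ \ T i).sup v).toReal - (Finset.univ.sup v).toReal)) ≤ 0 := by
      apply Finset.sum_nonpos
      intro i _
      have := hle i
      simp only [sub_nonpos]
      exact_mod_cast this
    linarith
end

section
/- In the Information Diffusion Mechanism (IDM) on a rooted tree, where the item is passed along the critical diffusion sequence C_w = (1, 2, …, w) toward the global highest bidder w, agent i ∈ C_w receives allocation under SW*(t_{−(i+1)}) and pays v*_{−i} − (v*_{−(i+1)} − π_i v_i), the total seller revenue equals v*_{−1}, the highest bid among agents outside the subtree of the first critical node. -/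
/-- IDM revenue on a rooted tree: the item travels along the critical
diffusion sequence `c 0, c 1, …, c k = w` towards the global highest bidder
`w`; agent `c j` temporarily wins iff her bid equals `v*_{−(j+1)}` and pays
`v*_{−j} − (v*_{−(j+1)} − π_j v_j)`.  If the item is finally allocated at
step `m` (i.e. `v (c m) = v*_{−(m+1)}`), the payments telescope and the total
seller revenue equals `v*_{−1}`, the highest bid outside the subtree of the
first critical node. -/
theorem idm_revenue (n k : ℕ) (v : Fin n → NNReal) (T : Fin n → Finset (Fin n))
    (hmem : ∀ i, i ∈ T i) (hnest : ∀ i j, j ∈ T i → T j ⊆ T i)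
    (c : ℕ → Fin n)
    (hchain : ∀ j < k, T (c (j + 1)) ⊆ T (c j) ∧ c (j + 1) ∈ T (c j))
    (w : Fin n) (hcw : c k = w) (hwmax : v w = Finset.univ.sup v)
    (vminus : ℕ → NNReal)
    (hvminus : ∀ j ≤ k, vminus j = (Finset.univ \ T (c j)).sup v)
    (hvlast : vminus (k + 1) = Finset.univ.sup v)
    (m : ℕ) (hm : m ≤ k) (hwin : v (c m) = vminus (m + 1))
    (pay : ℕ → ℝ)
    (hpay : ∀ j ≤ m, pay j =
      (vminus j).toReal -
        ((vminus (j + 1)).toReal - (if j = m then (v (c m)).toReal else 0))) :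
    ∑ j ∈ Finset.range (m + 1), pay j = (vminus 0).toReal := by
  have hsum : ∑ j ∈ Finset.range (m + 1), pay j
      = ∑ j ∈ Finset.range m, ((vminus j).toReal - (vminus (j + 1)).toReal)
        + pay m := by
    rw [Finset.sum_range_succ]
    congr 1
    apply Finset.sum_congr rfl
    intro j hj
    have hjm : j < m := Finset.mem_range.mp hj
    rw [hpay j hjm.le, if_neg hjm.ne]
    ring
  rw [hsum, Finset.sum_range_sub' (fun j => (vminus j).toReal),
    hpay m le_rfl, if_pos rfl, hwin]
  ring
end

section
/- In the IDM on a rooted tree, every agent's utility under truthful reporting is non-negative: each critical node i ∈ C_w has utility v*_{−(i+1)} − v*_{−i} ≥ 0 (interpreting the winner's term appropriately), and all other agents have utility 0. -/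
/-- Individual rationality of IDM on a rooted tree: under truthful reporting,
every critical node `c j` on the path to the winner has utility
`v*_{−(j+1)} − v*_{−j} ≥ 0` (the winner's term interpreted via her allocation),
and all other agents have utility `0`. -/
theorem idm_ir (n k : ℕ) (v : Fin n → NNReal) (T : Fin n → Finset (Fin n))
    (hmem : ∀ i, i ∈ T i) (hnest : ∀ i j, j ∈ T i → T j ⊆ T i)
    (c : ℕ → Fin n)
    (hchain : ∀ j < k, T (c (j + 1)) ⊆ T (c j) ∧ c (j + 1) ∈ T (c j))
    (w : Fin n) (hcw : c k = w) (hwmax : v w = Finset.univ.sup v)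
    (vminus : ℕ → NNReal)
    (hvminus : ∀ j ≤ k, vminus j = (Finset.univ \ T (c j)).sup v)
    (hvlast : vminus (k + 1) = Finset.univ.sup v)
    (m : ℕ) (hm : m ≤ k) (hwin : v (c m) = vminus (m + 1))
    (pay : ℕ → ℝ)
    (hpay : ∀ j ≤ m, pay j =
      (vminus j).toReal -
        ((vminus (j + 1)).toReal - (if j = m then (v (c m)).toReal else 0))) :
    (∀ j ≤ m,
      0 ≤ (if j = m then (v (c m)).toReal else 0) - pay j ∧
        (if j = m then (v (c m)).toReal else 0) - pay j =
          (vminus (j + 1)).toReal - (vminus j).toReal) := by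
  intro j hj
  have hjk : j ≤ k := hj.trans hm
  have hle : vminus j ≤ vminus (j + 1) := by
    rcases lt_or_eq_of_le hjk with h | h
    · rw [hvminus j hjk, hvminus (j + 1) h]
      exact Finset.sup_mono (Finset.sdiff_subset_sdiff le_rfl (hchain j h).1)
    · rw [hvminus j hjk, h, hvlast]
      exact Finset.sup_mono (Finset.sdiff_subset)
  have heq : (if j = m then (v (c m)).toReal else 0) - pay j =
      (vminus (j + 1)).toReal - (vminus j).toReal := by
    rw [hpay j hj]; ring
  refine ⟨?_, heq⟩
  rw [heq]
  simpa using sub_nonneg.mpr (NNReal.coe_le_coe.mpr hle)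
end

section
/- In the Multilevel Mechanism (MLM) on a rooted tree, where the highest bidder wins and each agent i pays x_i^{MLM} = x_i^{ge} − ∑_{k ∈ C(i)} x_k^{ge} with x_i^{ge} = v*_{−i} − (v*_N − ∑_{j ∈ T(i)} π_j v_j), the total seller revenue equals ∑over root's children c of x_c^{ge}, which is non-negative; hence MLM is weakly budget balanced. -/
/-- Groupwise externality payment of agent `i` in the Multilevel Mechanism:
`x_i^{ge} = v*_{−i} − (v*_N − ∑_{j ∈ T(i)} π_j v_j)`, where `T i` is the
subtree of `i`, `v*_{−i}` the highest value outside `T i`, and the winner `w`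
(the global maximizer) is the only agent with `π = 1`. -/
def xge (n : ℕ) (v : Fin n → NNReal) (T : Fin n → Finset (Fin n)) (w : Fin n)
    (i : Fin n) : ℝ :=
  ((Finset.univ \ T i).sup v).toReal - (Finset.univ.sup v).toReal +
    (if w ∈ T i then (v w).toReal else 0)

/-- MLM payment: `x_i^{MLM} = x_i^{ge} − ∑_{k ∈ C(i)} x_k^{ge}`, where `C(i)`
are the children of `i` in the rooted tree given by `parent` (`parent k = none`
means `k` is a child of the seller/root). -/
def xmlm (n : ℕ) (v : Fin n → NNReal) (T : Fin n → Finset (Fin n)) (w : Fin n)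
    (parent : Fin n → Option (Fin n)) (i : Fin n) : ℝ :=
  xge n v T w i -
    ∑ k ∈ Finset.univ.filter fun k => parent k = some i, xge n v T w k

lemma xge_nonneg (n : ℕ) (v : Fin n → NNReal) (T : Fin n → Finset (Fin n))
    (w : Fin n) (hw : v w = Finset.univ.sup v) (i : Fin n) :
    0 ≤ xge n v T w i := by
  unfold xge
  by_cases h : w ∈ T i
  · simp only [h, if_true, ← hw]
    have : (0:ℝ) ≤ ((Finset.univ \ T i).sup v).toReal := NNReal.coe_nonneg _
    linarith
  · simp only [h, if_false, add_zero, sub_nonneg]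
    have hmem : w ∈ Finset.univ \ T i := by simp [h]
    have : Finset.univ.sup v ≤ (Finset.univ \ T i).sup v := by
      rw [← hw]; exact Finset.le_sup hmem
    exact_mod_cast this

/-- Weak budget balance of the Multilevel Mechanism on a rooted tree: the MLM
payments telescope, so the seller's total revenue equals the sum of the
groupwise externalities of the root's children, which is non-negative. -/
theorem mlm_weakly_budget_balanced (n : ℕ) (v : Fin n → NNReal)
    (T : Fin n → Finset (Fin n)) (parent : Fin n → Option (Fin n))
    (hmem : ∀ i, i ∈ T i)
    (hsub : ∀ i k, parent k = some i → T k ⊆ T i ∧ i ∉ T k)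
    (w : Fin n) (hw : v w = Finset.univ.sup v) :
    (∑ i, xmlm n v T w parent i =
        ∑ c ∈ Finset.univ.filter fun c => parent c = none, xge n v T w c) ∧
      0 ≤ ∑ i, xmlm n v T w parent i := by
  have key : ∑ i, xmlm n v T w parent i =
      ∑ c ∈ Finset.univ.filter fun c => parent c = none, xge n v T w c := by
    have hfib : ∑ o : Option (Fin n),
        ∑ k ∈ Finset.univ.filter (fun k => parent k = o), xge n v T w k =
        ∑ k, xge n v T w k :=
      Finset.sum_fiberwise Finset.univ parent (xge n v T w)
    rw [Fintype.sum_option] at hfib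
    simp only [xmlm, Finset.sum_sub_distrib]
    linarith
  refine ⟨key, key ▸ Finset.sum_nonneg fun c _ => xge_nonneg n v T w hw c⟩
end
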